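/- Let E be a nonzero Banach space and let a be a nonzero element of E. Then the set U_a := {⋆ ∈ Mltp(E) : ⋆ is unital and a is invertible in (E,⋆)} is open in Mltp(E) (with the topology induced by the operator norm on bounded bilinear operators), and the map ⋆ ↦ a⁻¹_⋆ from U_a to E is continuous. -/

import Mathlib

/-!
A continuous multiplication `⋆` is unital with `a` invertible exactly when the left and right
multiplications `L_a`, `R_a` by `a` are bijective, i.e. (by the open mapping theorem) units of the
Banach algebra `E →L[ℝ] E`. Both depend continuously on `⋆` and the units form an open set, so
`U_a` is open. Moreover `a⁻¹ = L_a⁻¹ (L_a⁻¹ a)`, because `L_a e = a` and `L_a a⁻¹ = e`;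
inversion in a Banach algebra is continuous, so this expression is continuous in `⋆`.
-/

/-- The set of continuous multiplications on `E`: associative bounded bilinear operators
`E × E → E`, as a subtype of the space of bounded bilinear operators with the operator-norm
topology. -/
abbrev Mltp (E : Type*) [NormedAddCommGroup E] [NormedSpace ℝ E] :=
  {g : E →L[ℝ] E →L[ℝ] E // ∀ x y z : E, g (g x y) z = g x (g y z)}

/-- `Ua E a` is the set of (unital) continuous multiplications `⋆` on `E` for which `a` is
invertible in `(E, ⋆)`. -/
def Ua (E : Type*) [NormedAddCommGroup E] [NormedSpace ℝ E] (a : E) : Set (Mltp E) :=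
  {f : Mltp E | ∃ e : E, (∀ x : E, f.1 e x = x ∧ f.1 x e = x) ∧
    ∃ b : E, f.1 a b = e ∧ f.1 b a = e}

open Function

section AssociativeOperation

variable {M : Type*} (mul : M → M → M)

theorem exists_unit_and_inverse_iff_bijective
    (assoc : ∀ x y z, mul (mul x y) z = mul x (mul y z)) (a : M) :
    (∃ e, (∀ x, mul e x = x ∧ mul x e = x) ∧ ∃ b, mul a b = e ∧ mul b a = e) ↔
      Bijective (mul a) ∧ Bijective (fun x => mul x a) := by
  constructor
  · rintro ⟨e, he, b, hab, hba⟩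
    refine ⟨bijective_iff_has_inverse.2 ⟨mul b, fun x => ?_, fun x => ?_⟩,
      bijective_iff_has_inverse.2 ⟨fun x => mul x b, fun x => ?_, fun x => ?_⟩⟩
    · rw [← assoc, hba, (he x).1]
    · rw [← assoc, hab, (he x).1]
    · show mul (mul x a) b = x
      rw [assoc, hab, (he x).2]
    · show mul (mul x b) a = x
      rw [assoc, hba, (he x).2]
  · rintro ⟨hl, hr⟩
    obtain ⟨e, hae⟩ := hl.2 a
    have he_left : ∀ x, mul e x = x := fun x => hl.1 (by rw [← assoc, hae])
    have he_right : ∀ x, mul x e = x := fun x => by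
      obtain ⟨y, rfl⟩ := hr.2 x
      rw [assoc, hae]
    obtain ⟨b, hab⟩ := hl.2 e
    obtain ⟨b', hba⟩ := hr.2 e
    have hb : b' = b := by
      calc b' = mul b' (mul a b) := by rw [hab, he_right]
        _ = b := by rw [← assoc, show mul b' a = e from hba, he_left]
    exact ⟨e, fun x => ⟨he_left x, he_right x⟩, b, hab, hb ▸ hba⟩

end AssociativeOperation

section Multiplication

variable {E : Type*} [NormedAddCommGroup E] [NormedSpace ℝ E]

theorem mem_Ua_iff_isUnit [CompleteSpace E] {a : E} {f : Mltp E} :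
    f ∈ Ua E a ↔ IsUnit (f.1 a) ∧ IsUnit (f.1.flip a) := by
  simp only [ContinuousLinearMap.isUnit_iff_bijective]
  exact exists_unit_and_inverse_iff_bijective _ f.2 a

theorem Ua_eq_preimage_units [CompleteSpace E] (a : E) :
    Ua E a = (fun f : Mltp E => f.1 a) ⁻¹' {T | IsUnit T} ∩
      (fun f : Mltp E => f.1.flip a) ⁻¹' {T | IsUnit T} :=
  Set.ext fun _ => mem_Ua_iff_isUnit

theorem continuous_mltp_apply (a : E) : Continuous fun f : Mltp E => f.1 a := by
  fun_prop

theorem continuous_mltp_flip_apply (a : E) : Continuous fun f : Mltp E => f.1.flip a :=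
  ((ContinuousLinearMap.flipₗᵢ ℝ E E E).continuous.comp continuous_subtype_val).clm_apply
    continuous_const

theorem isOpen_Ua [CompleteSpace E] (a : E) : IsOpen (Ua E a) := by
  rw [Ua_eq_preimage_units]
  exact (Units.isOpen.preimage (continuous_mltp_apply a)).inter
    (Units.isOpen.preimage (continuous_mltp_flip_apply a))

theorem eq_ring_inverse_apply_ring_inverse_apply {a e b : E} {f : Mltp E}
    (hae : f.1 a e = a) (hab : f.1 a b = e) (hL : IsUnit (f.1 a)) :
    b = Ring.inverse (f.1 a) (Ring.inverse (f.1 a) a) := by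
  set R := Ring.inverse (f.1 a)
  have cancel : ∀ y, R (f.1 a y) = y := fun y => by
    show (R * f.1 a) y = y
    rw [Ring.inverse_mul_cancel _ hL]
    rfl
  calc b = R (f.1 a b) := (cancel b).symm
    _ = R (R (f.1 a e)) := by rw [hab, cancel]
    _ = R (R a) := by rw [hae]

theorem continuousAt_ring_inverse_of_isUnit {R : Type*} [NormedRing R] [HasSummableGeomSeries R]
    {x : R} (hx : IsUnit x) : ContinuousAt Ring.inverse x := by
  obtain ⟨u, rfl⟩ := hx
  exact NormedRing.inverse_continuousAt u

theorem continuous_ring_inverse_apply_ring_inverse_apply [CompleteSpace E] (a : E) :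
    Continuous fun f : {f : Mltp E // f ∈ Ua E a} =>
      Ring.inverse (f.1.1 a) (Ring.inverse (f.1.1 a) a) := by
  refine continuous_iff_continuousAt.2 fun f => ?_
  have hinv : ContinuousAt (fun g : {f : Mltp E // f ∈ Ua E a} => Ring.inverse (g.1.1 a)) f :=
    (continuousAt_ring_inverse_of_isUnit (mem_Ua_iff_isUnit.1 f.2).1).comp
      (f := fun g : {f : Mltp E // f ∈ Ua E a} => g.1.1 a)
      ((continuous_mltp_apply a).comp continuous_subtype_val).continuousAt
  exact hinv.clm_apply (hinv.clm_apply continuousAt_const)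

end Multiplication

theorem stmt_14_general
    {E : Type*} [NormedAddCommGroup E] [NormedSpace ℝ E] [CompleteSpace E]
    (a : E) :
    IsOpen (Ua E a) ∧
    ∀ (inv : {f : Mltp E // f ∈ Ua E a} → E),
      (∀ f : {f : Mltp E // f ∈ Ua E a},
        ∃ e : E, (∀ x : E, f.1.1 e x = x ∧ f.1.1 x e = x) ∧
          f.1.1 a (inv f) = e ∧ f.1.1 (inv f) a = e) →
      Continuous inv := by
  refine ⟨isOpen_Ua a, fun inv hinv => ?_⟩
  have hformula : inv = fun f : {f : Mltp E // f ∈ Ua E a} =>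
      Ring.inverse (f.1.1 a) (Ring.inverse (f.1.1 a) a) := by
    funext f
    obtain ⟨e, he, hab, -⟩ := hinv f
    exact eq_ring_inverse_apply_ring_inverse_apply (he a).2 hab (mem_Ua_iff_isUnit.1 f.2).1
  exact hformula ▸ continuous_ring_inverse_apply_ring_inverse_apply a

/-- Let `E` be a nonzero Banach space and `a ≠ 0` in `E`.  The set
`U_a = {⋆ ∈ Mltp(E) : ⋆ unital and a invertible in (E,⋆)}` is open in `Mltp(E)`, and the
map `⋆ ↦ a⁻¹_⋆` from `U_a` to `E` is continuous. -/
theorem stmt_14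
    {E : Type*} [NormedAddCommGroup E] [NormedSpace ℝ E] [CompleteSpace E] [Nontrivial E]
    (a : E) (ha : a ≠ 0) :
    IsOpen (Ua E a) ∧
    ∀ (inv : {f : Mltp E // f ∈ Ua E a} → E),
      (∀ f : {f : Mltp E // f ∈ Ua E a},
        ∃ e : E, (∀ x : E, f.1.1 e x = x ∧ f.1.1 x e = x) ∧
          f.1.1 a (inv f) = e ∧ f.1.1 (inv f) a = e) →
      Continuous inv :=
  stmt_14_general a
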